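/- Let G = (Z/3)^9 with quadratic form q(x) = (4/3)·wt(x) mod 2Z (the discriminant form of A_2^9, where wt is the number of nonzero coordinates). If H ⊆ G is an isotropic subgroup of order 27 all of whose nonzero elements have weight 6 or 9, then H contains an element of weight 9. -/
import Mathlib


/-- The Hamming weight of a vector in `F_3^9`. -/
def hammingWt (x : Fin 9 → ZMod 3) : ℕ :=
  (Finset.univ.filter fun i => x i ≠ 0).card

lemma fiber_card (H : Submodule (ZMod 3) (Fin 9 → ZMod 3))
    (HF : Finset (Fin 9 → ZMod 3)) (hmem : ∀ x, x ∈ HF ↔ x ∈ H) (i : Fin 9)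
    (y : Fin 9 → ZMod 3) (hy : y ∈ H) (hyi : y i ≠ 0) (c : ZMod 3) :
    (HF.filter (fun x => x i = 0)).card = (HF.filter (fun x => x i = c)).card := by
  apply Finset.card_bij' (fun x _ => x + (c * (y i)⁻¹) • y)
    (fun x _ => x - (c * (y i)⁻¹) • y)
  · intro a ha
    simp only [Finset.mem_filter, hmem] at ha ⊢
    refine ⟨H.add_mem ha.1 (H.smul_mem _ hy), ?_⟩
    simp [ha.2, mul_assoc, inv_mul_cancel₀ hyi]
  · intro a ha
    simp only [Finset.mem_filter, hmem] at ha ⊢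
    refine ⟨H.sub_mem ha.1 (H.smul_mem _ hy), ?_⟩
    simp [ha.2, mul_assoc, inv_mul_cancel₀ hyi]
  · intro a _; simp
  · intro a _; simp

lemma count_nonzero (H : Submodule (ZMod 3) (Fin 9 → ZMod 3))
    (HF : Finset (Fin 9 → ZMod 3)) (hmem : ∀ x, x ∈ HF ↔ x ∈ H)
    (hHFcard : HF.card = 27) (i : Fin 9) :
    (HF.filter (fun x => x i ≠ 0)).card = 0 ∨
    (HF.filter (fun x => x i ≠ 0)).card = 18 := by
  classical
  by_cases hex : ∃ y ∈ H, y i ≠ 0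
  · right
    obtain ⟨y, hy, hyi⟩ := hex
    have hfib : ∀ c : ZMod 3, (HF.filter (fun x => x i = c)).card =
        (HF.filter (fun x => x i = 0)).card :=
      fun c => (fiber_card H HF hmem i y hy hyi c).symm
    have hpart : HF.card = ∑ c : ZMod 3, (HF.filter (fun x => x i = c)).card :=
      Finset.card_eq_sum_card_fiberwise (fun x _ => Finset.mem_univ (x i))
    have h3 : 27 = 3 * (HF.filter (fun x => x i = 0)).card := by
      rw [← hHFcard, hpart]
      simp [hfib, Finset.card_univ, mul_comm]
    have h0 : (HF.filter (fun x => x i = 0)).card = 9 := by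
      clear hfib hpart
      revert h3; generalize (HF.filter (fun x => x i = 0)).card = a
      intro h3; omega
    have hsub : HF.filter (fun x => x i ≠ 0) = HF \ HF.filter (fun x => x i = 0) := by
      simp [Finset.filter_not, ne_eq]
    rw [hsub, Finset.card_sdiff_of_subset (Finset.filter_subset _ _), hHFcard, h0]
  · left
    rw [Finset.card_eq_zero, Finset.filter_eq_empty_iff]
    intro x hx
    push_neg at hex
    simpa using hex x ((hmem x).1 hx)

/-- Let `G = (ℤ/3)^9` with the quadratic form `q(x) = (4/3)·wt(x) mod 2ℤ` (the discriminant
form of `A_2^9`). If `H ⊆ G` is an isotropic subgroup of order `27` all of whose nonzero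
elements have weight `6` or `9`, then `H` contains an element of weight `9`. -/
theorem stmt17 (H : Submodule (ZMod 3) (Fin 9 → ZMod 3))
    (hcard : Nat.card H = 27)
    (hiso : ∀ x ∈ H, (((4 * (hammingWt x : ℚ)) / 3 : ℚ) : AddCircle (2 : ℚ)) = 0)
    (hw : ∀ x ∈ H, x ≠ 0 → hammingWt x = 6 ∨ hammingWt x = 9) :
    ∃ x ∈ H, hammingWt x = 9 := by
  classical
  by_contra hcon
  push_neg at hcon
  set HF := (H : Set (Fin 9 → ZMod 3)).toFinset with hHF
  have hHFcard : HF.card = 27 := by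
    rw [hHF, Set.toFinset_card, ← Nat.card_eq_fintype_card]; exact hcard
  have hmem : ∀ x, x ∈ HF ↔ x ∈ H := by
    intro x; simp [hHF, Set.mem_toFinset]
  have h0mem : (0 : Fin 9 → ZMod 3) ∈ HF := (hmem 0).2 H.zero_mem
  -- every nonzero element has weight 6
  have hwt6 : ∀ x ∈ HF, x ≠ 0 → hammingWt x = 6 := by
    intro x hx hx0
    rcases hw x ((hmem x).1 hx) hx0 with h | h
    · exact h
    · exact absurd h (hcon x ((hmem x).1 hx))
  -- sum of weights = 156
  have hsum : ∑ x ∈ HF, hammingWt x = 156 := by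
    rw [← Finset.sum_erase_add _ _ h0mem]
    have h1 : ∀ x ∈ HF.erase 0, hammingWt x = 6 := fun x hx =>
      hwt6 x (Finset.mem_of_mem_erase hx) (Finset.ne_of_mem_erase hx)
    rw [Finset.sum_congr rfl h1, Finset.sum_const, Finset.card_erase_of_mem h0mem,
      hHFcard]
    simp [hammingWt]
  -- sum of weights = sum over coordinates of counts
  have hswap : ∑ x ∈ HF, hammingWt x =
      ∑ i : Fin 9, (HF.filter (fun x => x i ≠ 0)).card := by
    simp only [hammingWt, Finset.card_filter]
    rw [Finset.sum_comm]
  have hdvd : (18 : ℕ) ∣ ∑ i : Fin 9, (HF.filter (fun x => x i ≠ 0)).card := by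
    apply Finset.dvd_sum
    intro i _
    rcases count_nonzero H HF hmem hHFcard i with h | h <;> rw [h] <;> norm_num
  rw [← hswap, hsum] at hdvd
  norm_num at hdvd
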